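/- Let f_1,…,f_M be reals, f_add = ∑_i f_i, and ℓ: ℝ → ℝ differentiable. Then ℓ(y·f_add) = (1/M)∑_i ℓ(y·M·f_i) − (1/M)∑_i B_ℓ(M·f_i, f_add) for any y ∈ {−1,+1}, provided ℓ is gradient-symmetric. -/

import Mathlib

/-!
Gradient symmetry `ℓ'(v) + ℓ'(-v) = c` integrates to `ℓ(-v) = ℓ(v) - c v`, so flipping the label
`y` changes `ℓ` only by a linear term, which commutes with averaging. It therefore suffices to treat
`y = 1`, where the identity is the ambiguity decomposition for the points `M f_i`, whose mean is
`f_add`: summing the Bregman divergences `B_ℓ(M f_i, f_add)` the linear terms cancel because the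
deviations from the mean sum to zero.
-/

open Finset

noncomputable def bregmanDiv (ℓ : ℝ → ℝ) (u v : ℝ) : ℝ := ℓ u - ℓ v - deriv ℓ v * (u - v)

theorem apply_neg_of_deriv_add_deriv_neg {ℓ : ℝ → ℝ} (hd : Differentiable ℝ ℓ) {c : ℝ}
    (hgs : ∀ v, deriv ℓ v + deriv ℓ (-v) = c) (v : ℝ) : ℓ (-v) = ℓ v - c * v := by
  have hderiv : ∀ x, HasDerivAt (fun x => ℓ (-x) - ℓ x + c * x) 0 x := by
    intro x
    have h := ((((hd (-x)).hasDerivAt.comp x (hasDerivAt_neg x)).sub (hd x).hasDerivAt).add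
      ((hasDerivAt_id x).const_mul c))
    rwa [show deriv ℓ (-x) * -1 - deriv ℓ x + c * 1 = 0 by linarith [hgs x]] at h
  have hconst := is_const_of_deriv_eq_zero (fun x => (hderiv x).differentiableAt)
    (fun x => (hderiv x).deriv) v 0
  simp only [neg_zero, mul_zero, add_zero, sub_self] at hconst
  linarith

section Ensemble

variable {ι : Type*} [Fintype ι] (ℓ : ℝ → ℝ) (x : ι → ℝ) {m : ℝ}

theorem sum_bregmanDiv_of_sum_eq (hm : ∑ i, x i = Fintype.card ι * m) :
    ∑ i, bregmanDiv ℓ (x i) m = ∑ i, ℓ (x i) - Fintype.card ι * ℓ m := by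
  simp only [bregmanDiv, sum_sub_distrib, ← mul_sum, hm, sum_const, card_univ, nsmul_eq_mul]
  ring

theorem apply_eq_sum_div_sub_sum_bregmanDiv_div [Nonempty ι]
    (hm : ∑ i, x i = Fintype.card ι * m) :
    ℓ m = (∑ i, ℓ (x i)) / Fintype.card ι - (∑ i, bregmanDiv ℓ (x i) m) / Fintype.card ι := by
  have hcard : (Fintype.card ι : ℝ) ≠ 0 := Nat.cast_ne_zero.mpr Fintype.card_ne_zero
  rw [sum_bregmanDiv_of_sum_eq ℓ x hm]
  field_simp
  ring

variable {ℓ}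

theorem sum_apply_mul_div_sub_apply_mul [Nonempty ι] {c : ℝ}
    (hsymm : ∀ v, ℓ (-v) = ℓ v - c * v) (hm : ∑ i, x i = Fintype.card ι * m)
    {y : ℝ} (hy : y = -1 ∨ y = 1) :
    (∑ i, ℓ (y * x i)) / Fintype.card ι - ℓ (y * m) =
      (∑ i, ℓ (x i)) / Fintype.card ι - ℓ m := by
  have hcard : (Fintype.card ι : ℝ) ≠ 0 := Nat.cast_ne_zero.mpr Fintype.card_ne_zero
  rcases hy with rfl | rfl
  · simp only [neg_one_mul, hsymm, sum_sub_distrib, ← mul_sum, hm]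
    field_simp
    ring
  · simp only [one_mul]

end Ensemble

theorem stmt9_general (ℓ : ℝ → ℝ) (hd : Differentiable ℝ ℓ)
    (c : ℝ) (hgs : ∀ v : ℝ, deriv ℓ v + deriv ℓ (-v) = c)
    (y : ℝ) (hy : y = -1 ∨ y = 1) (M : ℕ) (hM : 1 ≤ M) (f : Fin M → ℝ) :
    ℓ (y * (∑ i, f i)) =
      (∑ i, ℓ (y * (M * f i))) / M -
        (∑ i, (ℓ (M * f i) - ℓ (∑ j, f j)
          - deriv ℓ (∑ j, f j) * (M * f i - ∑ j, f j))) / M := by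
  have : NeZero M := ⟨by omega⟩
  have hmean : ∑ i, (M : ℝ) * f i = Fintype.card (Fin M) * ∑ j, f j := by
    rw [Fintype.card_fin, mul_sum]
  have hdecomp := apply_eq_sum_div_sub_sum_bregmanDiv_div ℓ _ hmean
  have hflip := sum_apply_mul_div_sub_apply_mul _ (apply_neg_of_deriv_add_deriv_neg hd hgs)
    hmean hy
  simp only [Fintype.card_fin, bregmanDiv] at hdecomp hflip
  linarith

/-- Ambiguity decomposition for additive ensembles. -/
theorem stmt9 (ℓ : ℝ → ℝ) (hd : Differentiable ℝ ℓ) (hconv : StrictConvexOn ℝ Set.univ ℓ)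
    (c : ℝ) (hgs : ∀ v : ℝ, deriv ℓ v + deriv ℓ (-v) = c)
    (y : ℝ) (hy : y = -1 ∨ y = 1) (M : ℕ) (hM : 1 ≤ M) (f : Fin M → ℝ) :
    ℓ (y * (∑ i, f i)) =
      (∑ i, ℓ (y * (M * f i))) / M -
        (∑ i, (ℓ (M * f i) - ℓ (∑ j, f j)
          - deriv ℓ (∑ j, f j) * (M * f i - ∑ j, f j))) / M :=
  stmt9_general ℓ hd c hgs y hy M hM f
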